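/- arXiv:2602.10277 — 2 statements merged into one kernel-verified Lean document; each statement's English description precedes it below -/
import Mathlib

section
/- Fix an integer N ≥ 2 and Γ > 0. There is a constant C > 0, depending only on N and Γ, such that for every Γ-bounded configuration of the blind-source-separation setup the quantity u in the decomposition w_e − w₀ = u·w₀ + w_⊥ can be written as u = u₀ + u₁, where u₀ is real with u₀ ≥ −1 and |u₀| ≤ C·( max_{p≠q}|C^s_{pq}| + ‖w_⊥‖ ), and u₁ ∈ ℂ with |u₁| ≤ C·max_{p≠q}|C^s_{pq}|. -/
open MeasureTheory ProbabilityTheory Complex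
open scoped ComplexConjugate

noncomputable section

namespace BSS

variable {N : ℕ} {Ω : Type} [MeasurableSpace Ω]

/-- The observed random vector `x = A s + n`. -/
def xvec (A : Matrix (Fin N) (Fin N) ℂ) (s n : Ω → Fin N → ℂ) (ω : Ω) : Fin N → ℂ :=
  A.mulVec (s ω) + n ω

/-- The source correlation matrix `C^s = 𝔼{s s*}`. -/
def Cs (μ : Measure Ω) (s : Ω → Fin N → ℂ) : Matrix (Fin N) (Fin N) ℂ :=
  Matrix.of fun i j => ∫ ω, s ω i * conj (s ω j) ∂μ

/-- The noise correlation matrix `C^n = 𝔼{n n*}`. -/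
def Cn (μ : Measure Ω) (n : Ω → Fin N → ℂ) : Matrix (Fin N) (Fin N) ℂ :=
  Matrix.of fun i j => ∫ ω, n ω i * conj (n ω j) ∂μ

/-- `c₁`: the `i₁` column of `(A⁻¹)*`. -/
def c1 (A : Matrix (Fin N) (Fin N) ℂ) (i1 : Fin N) : EuclideanSpace ℂ (Fin N) :=
  (WithLp.equiv 2 _).symm fun j => conj (A⁻¹ i1 j)

/-- `w₀ = c₁ / ‖c₁‖`. -/
def w0 (A : Matrix (Fin N) (Fin N) ℂ) (i1 : Fin N) : EuclideanSpace ℂ (Fin N) :=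
  ‖c1 A i1‖⁻¹ • c1 A i1

/-- `y = w* x`. -/
def yproj (A : Matrix (Fin N) (Fin N) ℂ) (s n : Ω → Fin N → ℂ)
    (w : EuclideanSpace ℂ (Fin N)) (ω : Ω) : ℂ :=
  ∑ j, conj (w j) * xvec A s n ω j

/-- The kurtosis contrast `K(w) = 𝔼|y|⁴ − 2 − |𝔼 y²|²` (for pre-whitened data). -/
def Kf (μ : Measure Ω) (A : Matrix (Fin N) (Fin N) ℂ) (s n : Ω → Fin N → ℂ)
    (w : EuclideanSpace ℂ (Fin N)) : ℝ :=
  (∫ ω, ‖yproj A s n w ω‖ ^ 4 ∂μ) - 2 - ‖∫ ω, (yproj A s n w ω) ^ 2 ∂μ‖ ^ 2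

/-- `κ₁ = 𝔼|s₁|⁴ − 2 − |𝔼 s₁²|²`. -/
def kappa1 (μ : Measure Ω) (s : Ω → Fin N → ℂ) (i1 : Fin N) : ℝ :=
  (∫ ω, ‖s ω i1‖ ^ 4 ∂μ) - 2 - ‖∫ ω, (s ω i1) ^ 2 ∂μ‖ ^ 2

/-- The source–dependence functional `M^s`. -/
def Ms (μ : Measure Ω) (s : Ω → Fin N → ℂ) (i1 : Fin N) : ℝ :=
  (⨆ j : Fin N, if j = i1 then 0 else
      |(∫ ω, ‖s ω j‖ ^ 2 * ‖s ω i1‖ ^ 2 ∂μ) -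
          (∫ ω, ‖s ω j‖ ^ 2 ∂μ) * (∫ ω, ‖s ω i1‖ ^ 2 ∂μ)| +
      ‖(∫ ω, (s ω j) ^ 2 * (conj (s ω i1)) ^ 2 ∂μ) -
          (∫ ω, (s ω j) ^ 2 ∂μ) * (∫ ω, (conj (s ω i1)) ^ 2 ∂μ)‖)
  + (⨆ p : Fin N × Fin N, if p.1 ≠ i1 ∧ p.2 ≠ i1 ∧ p.1 ≠ p.2 then
      ‖(∫ ω, s ω p.2 * s ω p.1 * (conj (s ω i1)) ^ 2 ∂μ) -
          (∫ ω, s ω p.2 * s ω p.1 ∂μ) * (∫ ω, (conj (s ω i1)) ^ 2 ∂μ)‖ +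
      ‖(∫ ω, s ω p.2 * conj (s ω p.1) * (s ω i1 * conj (s ω i1)) ∂μ) -
          (∫ ω, s ω p.2 * s ω i1 ∂μ) * (∫ ω, conj (s ω p.1) * conj (s ω i1) ∂μ)‖
    else 0)
  + (⨆ p : Fin N × Fin N, ‖(Cs μ s - 1) p.1 p.2‖)

/-- The noise size functional `M^n`. -/
def Mn (μ : Measure Ω) (n : Ω → Fin N → ℂ) : ℝ :=
  ⨆ j : Fin N, ((∫ ω, ‖n ω j‖ ^ 2 ∂μ) + ∫ ω, ‖n ω j‖ ^ 4 ∂μ)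

/-- Entrywise maximum norm of a matrix. -/
def mnorm (M : Matrix (Fin N) (Fin N) ℂ) : ℝ := ⨆ i, ⨆ j, ‖M i j‖

/-- A configuration is `Γ`-bounded. -/
def GammaBounded (Γ : ℝ) (μ : Measure Ω) (A : Matrix (Fin N) (Fin N) ℂ)
    (s n : Ω → Fin N → ℂ) : Prop :=
  mnorm A ≤ Γ ∧ mnorm A⁻¹ ≤ Γ ∧ mnorm (Cs μ s)⁻¹ ≤ Γ ∧
  (∀ i, (∫ ω, ‖s ω i‖ ^ 8 ∂μ) ≤ Γ) ∧ (∀ i, (∫ ω, ‖n ω i‖ ^ 8 ∂μ) ≤ Γ)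

/-- `w_e = w̃_e · e^{i arg⟨w̃_e, w₀⟩}`. -/
def wE (wte w0v : EuclideanSpace ℂ (Fin N)) : EuclideanSpace ℂ (Fin N) :=
  Complex.exp (Complex.I * ((inner ℂ wte w0v : ℂ).arg : ℂ)) • wte

end BSS

namespace BSS

variable {N : ℕ} {Ω : Type} [MeasurableSpace Ω]

/-- `(C^s)⁻¹ w₀`. -/
def CsInvW0 (μ : Measure Ω) (s : Ω → Fin N → ℂ) (A : Matrix (Fin N) (Fin N) ℂ)
    (i1 : Fin N) : EuclideanSpace ℂ (Fin N) :=
  (WithLp.equiv 2 _).symm ((Cs μ s)⁻¹.mulVec ((WithLp.equiv 2 _) (w0 A i1)))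

/-- The coefficient `u = ⟨(C^s)⁻¹w₀, w⟩ / ⟨(C^s)⁻¹w₀, w₀⟩`. -/
def uCoef (μ : Measure Ω) (s : Ω → Fin N → ℂ) (A : Matrix (Fin N) (Fin N) ℂ)
    (i1 : Fin N) (wvec : EuclideanSpace ℂ (Fin N)) : ℂ :=
  (inner ℂ (CsInvW0 μ s A i1) wvec : ℂ) / (inner ℂ (CsInvW0 μ s A i1) (w0 A i1) : ℂ)

/-- `w_⊥ = w − u·w₀`. -/
def wPerp (μ : Measure Ω) (s : Ω → Fin N → ℂ) (A : Matrix (Fin N) (Fin N) ℂ)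
    (i1 : Fin N) (wvec : EuclideanSpace ℂ (Fin N)) : EuclideanSpace ℂ (Fin N) :=
  wvec - uCoef μ s A i1 wvec • w0 A i1

/-- Maximum modulus of the off-diagonal entries. -/
def offMax (M : Matrix (Fin N) (Fin N) ℂ) : ℝ :=
  ⨆ p : Fin N × Fin N, if p.1 = p.2 then 0 else ‖M p.1 p.2‖

end BSS

/-!
Put `u₀ := ⟪w₀, w⟫ = |⟪w̃ₑ, w₀⟫| - 1 ∈ [-1, 0]`, which is real thanks to the phase chosen in `wₑ`,
and `u₁ := u - u₀`. As `wₑ` and `w₀` are unit vectors, `|u₀| = ‖w‖² / 2`.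

With `v = (Cˢ)⁻¹ w₀` and `d = ⟪v, w₀⟫` one has `u₁ d = ⟪v - w₀, w⟫ + u₀ ⟪w₀ - v, w₀⟫`, hence
`‖u₁‖ ≤ 3 ‖v - w₀‖ / |d|`. Because `Cˢ` has unit diagonal, `v - w₀ = (Cˢ)⁻¹ (I - Cˢ) w₀` is
`O(max_{p≠q} |Cˢ_pq|)`; and `|d| ≥ 1/N` by Cauchy–Schwarz for the Gram matrix
`Cˢ_ij = ⟪s̄ᵢ, s̄ⱼ⟫_{L²}`: `1 = ⟪w₀, Cˢ v⟫² ≤ ⟪w₀, Cˢ w₀⟫ ⟪v, Cˢ v⟫ ≤ N |d|`.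

Finally `‖w‖ ≤ |u| + ‖w_⊥‖ ≤ |u₀| + ‖u₁‖ + ‖w_⊥‖` turns `|u₀| = ‖w‖² / 2` into a quadratic
inequality forcing `|u₀| ≤ 4 (‖u₁‖ + ‖w_⊥‖)`.
-/

open scoped InnerProductSpace Matrix

namespace EuclideanSpace

variable {𝕜 : Type*} [RCLike 𝕜] {n : Type*} [Fintype n]

theorem norm_le_sqrt_card_mul {x : EuclideanSpace 𝕜 n} {c : ℝ} (hc : 0 ≤ c)
    (hx : ∀ i, ‖x i‖ ≤ c) : ‖x‖ ≤ √(Fintype.card n) * c := by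
  rw [EuclideanSpace.norm_eq, ← Real.sqrt_sq hc, ← Real.sqrt_mul (Nat.cast_nonneg _)]
  gcongr
  calc ∑ i, ‖x i‖ ^ 2 ≤ ∑ _i : n, c ^ 2 := by gcongr with i; exact hx i
    _ = _ := by simp

end EuclideanSpace

namespace Matrix

variable {𝕜 : Type*} [RCLike 𝕜] {n : Type*} [Fintype n]

theorem norm_toLp_mulVec_le {M : Matrix n n 𝕜} {c : ℝ} (hc : 0 ≤ c) (hM : ∀ i j, ‖M i j‖ ≤ c)
    (x : EuclideanSpace 𝕜 n) :
    ‖WithLp.toLp 2 (M *ᵥ x.ofLp)‖ ≤ Fintype.card n * c * ‖x‖ := by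
  have hrow : ∀ i, ‖(M *ᵥ x.ofLp) i‖ ≤ √(Fintype.card n) * c * ‖x‖ := by
    intro i
    have hinner : (M *ᵥ x.ofLp) i = ⟪WithLp.toLp 2 (star (M i)), x⟫_𝕜 := by
      simp [mulVec, dotProduct, EuclideanSpace.inner_eq_star_dotProduct, mul_comm]
    rw [hinner]
    have hMi : ‖WithLp.toLp 2 (star (M i))‖ ≤ √(Fintype.card n) * c :=
      EuclideanSpace.norm_le_sqrt_card_mul hc fun j => by simpa using hM i j
    exact (norm_inner_le_norm _ _).trans (by gcongr)
  calc _ ≤ √(Fintype.card n) * ((√(Fintype.card n)) * c * ‖x‖) :=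
        EuclideanSpace.norm_le_sqrt_card_mul (by positivity) hrow
    _ = _ := by rw [← mul_assoc, ← mul_assoc, Real.mul_self_sqrt (Nat.cast_nonneg _)]

theorem norm_toLp_inv_mulVec_sub_le [DecidableEq n] {M : Matrix n n 𝕜} (hM : IsUnit M.det)
    {β ε : ℝ} (hβ : 0 ≤ β) (hε : 0 ≤ ε) (hinv : ∀ i j, ‖M⁻¹ i j‖ ≤ β)
    (hdefect : ∀ i j, ‖(1 - M) i j‖ ≤ ε) (x : EuclideanSpace 𝕜 n) :
    ‖WithLp.toLp 2 (M⁻¹ *ᵥ x.ofLp) - x‖ ≤ Fintype.card n ^ 2 * β * ε * ‖x‖ := by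
  have hsplit : WithLp.toLp 2 (M⁻¹ *ᵥ x.ofLp) - x
      = WithLp.toLp 2 (M⁻¹ *ᵥ (WithLp.toLp 2 ((1 - M) *ᵥ x.ofLp)).ofLp) := by
    rw [mulVec_mulVec, mul_sub, mul_one, nonsing_inv_mul _ hM, sub_mulVec, one_mulVec]
    rfl
  rw [hsplit]
  calc _ ≤ Fintype.card n * β * ‖WithLp.toLp 2 ((1 - M) *ᵥ x.ofLp)‖ :=
        norm_toLp_mulVec_le hβ hinv _
    _ ≤ Fintype.card n * β * (Fintype.card n * ε * ‖x‖) := by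
        gcongr; exact norm_toLp_mulVec_le hε hdefect x
    _ = _ := by ring

theorem norm_pow_four_le_re_inner_gram_mul_re_inner_inv {E : Type*} [SeminormedAddCommGroup E]
    [InnerProductSpace 𝕜 E] [DecidableEq n] (v : n → E) (hG : IsUnit (gram 𝕜 v).det)
    (x : EuclideanSpace 𝕜 n) :
    ‖x‖ ^ 4 ≤ RCLike.re ⟪x, WithLp.toLp 2 (gram 𝕜 v *ᵥ x.ofLp)⟫_𝕜 *
      RCLike.re ⟪WithLp.toLp 2 ((gram 𝕜 v)⁻¹ *ᵥ x.ofLp), x⟫_𝕜 := by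
  -- Cauchy–Schwarz for `∑ xᵢ vᵢ` and `∑ yᵢ vᵢ`, `y = G⁻¹ x`, whose inner product is `‖x‖²`.
  set G := gram 𝕜 v
  set y := G⁻¹ *ᵥ x.ofLp
  have hGy : G *ᵥ y = x.ofLp := by
    simp [y, mulVec_mulVec, mul_nonsing_inv _ hG]
  have hXY : star x.ofLp ⬝ᵥ G *ᵥ y = ((‖x‖ ^ 2 : ℝ) : 𝕜) := by
    rw [hGy, dotProduct_comm, ← EuclideanSpace.inner_eq_star_dotProduct,
      inner_self_eq_norm_sq_to_K]
    simp
  have hXX : ⟪x, WithLp.toLp 2 (G *ᵥ x.ofLp)⟫_𝕜 = star x.ofLp ⬝ᵥ G *ᵥ x.ofLp := by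
    rw [EuclideanSpace.inner_eq_star_dotProduct, dotProduct_comm]
  have hYY : ⟪WithLp.toLp 2 y, x⟫_𝕜 = star y ⬝ᵥ G *ᵥ y := by
    rw [hGy, EuclideanSpace.inner_eq_star_dotProduct, dotProduct_comm]
  rw [hXX, hYY, star_dotProduct_gram_mulVec, star_dotProduct_gram_mulVec]
  rw [star_dotProduct_gram_mulVec] at hXY
  have hcs := inner_mul_inner_self_le (𝕜 := 𝕜) (∑ i, x.ofLp i • v i) (∑ i, y i • v i)
  rw [norm_inner_symm (∑ i, y i • v i), hXY, RCLike.norm_ofReal,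
    abs_of_nonneg (by positivity)] at hcs
  linarith

end Matrix

theorem le_four_mul_of_two_mul_le_sq {a b : ℝ} (ha : 0 ≤ a) (ha1 : a ≤ 1) (hb : 0 ≤ b)
    (h : 2 * a ≤ (a + b) ^ 2) : a ≤ 4 * b := by
  nlinarith

section

variable {E : Type*} [NormedAddCommGroup E] [InnerProductSpace ℂ E]

theorem norm_inner_div_inner_sub_mul_le {w₀ v w : E} (hw₀ : ‖w₀‖ = 1) {t : ℝ}
    (ht : ⟪w₀, w⟫_ℂ = t) :
    ‖⟪v, w⟫_ℂ / ⟪v, w₀⟫_ℂ - t‖ * ‖⟪v, w₀⟫_ℂ‖ ≤ ‖v - w₀‖ * (|t| + ‖w‖) := by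
  by_cases hd : ⟪v, w₀⟫_ℂ = 0
  · simp only [hd, norm_zero, mul_zero]; positivity
  have hself : ⟪w₀, w₀⟫_ℂ = 1 := by simp [inner_self_eq_norm_sq_to_K, hw₀]
  have hid : (⟪v, w⟫_ℂ / ⟪v, w₀⟫_ℂ - t) * ⟪v, w₀⟫_ℂ = ⟪v - w₀, w⟫_ℂ + t * ⟪w₀ - v, w₀⟫_ℂ := by
    rw [inner_sub_left, inner_sub_left, ht, hself]
    field_simp
    ring
  rw [← norm_mul, hid]
  calc _ ≤ ‖v - w₀‖ * ‖w‖ + |t| * (‖w₀ - v‖ * ‖w₀‖) := by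
        refine (norm_add_le _ _).trans (add_le_add (norm_inner_le_norm _ _) ?_)
        rw [norm_mul, Complex.norm_real, Real.norm_eq_abs]
        gcongr
        exact norm_inner_le_norm _ _
    _ = _ := by rw [hw₀, norm_sub_rev]; ring

theorem exists_inner_sub_div_inner_eq_ofReal_add {w₀ wₑ v : E} (hw₀ : ‖w₀‖ = 1) (hwₑ : ‖wₑ‖ = 1)
    {r : ℝ} (hr : ⟪w₀, wₑ⟫_ℂ = r) (hr₀ : 0 ≤ r) (hd : ⟪v, w₀⟫_ℂ ≠ 0) :
    ∃ (u₀ : ℝ) (u₁ : ℂ), ⟪v, wₑ - w₀⟫_ℂ / ⟪v, w₀⟫_ℂ = u₀ + u₁ ∧ -1 ≤ u₀ ∧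
      |u₀| ≤ 4 * (3 * (‖v - w₀‖ / ‖⟪v, w₀⟫_ℂ‖) +
        ‖wₑ - w₀ - (⟪v, wₑ - w₀⟫_ℂ / ⟪v, w₀⟫_ℂ) • w₀‖) ∧
      ‖u₁‖ ≤ 3 * (‖v - w₀‖ / ‖⟪v, w₀⟫_ℂ‖) := by
  set w := wₑ - w₀
  set u := ⟪v, w⟫_ℂ / ⟪v, w₀⟫_ℂ
  set κ := ‖v - w₀‖ / ‖⟪v, w₀⟫_ℂ‖
  have ht : ⟪w₀, w⟫_ℂ = ((r - 1 : ℝ) : ℂ) := by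
    simp [w, hr, inner_self_eq_norm_sq_to_K, hw₀]
  have hw_sq : ‖w‖ ^ 2 = 2 * (1 - r) := by
    have hre : RCLike.re ⟪wₑ, w₀⟫_ℂ = r := by rw [← inner_conj_symm, hr]; simp
    rw [norm_sub_sq (𝕜 := ℂ), hre, hw₀, hwₑ]; ring
  have hr₁ : r ≤ 1 := by nlinarith [sq_nonneg ‖w‖]
  have hw_le : ‖w‖ ≤ 2 := by nlinarith [norm_nonneg w]
  have hu₁ : ‖u - (r - 1 : ℝ)‖ ≤ 3 * κ := by
    have hd' : 0 < ‖⟪v, w₀⟫_ℂ‖ := norm_pos_iff.2 hd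
    have habs : |r - 1| ≤ 1 := by rw [abs_le]; constructor <;> linarith
    calc ‖u - (r - 1 : ℝ)‖ = ‖u - (r - 1 : ℝ)‖ * ‖⟪v, w₀⟫_ℂ‖ / ‖⟪v, w₀⟫_ℂ‖ := by field_simp
      _ ≤ ‖v - w₀‖ * (|r - 1| + ‖w‖) / ‖⟪v, w₀⟫_ℂ‖ := by
          gcongr ?_ / _; exact norm_inner_div_inner_sub_mul_le hw₀ ht
      _ ≤ ‖v - w₀‖ * 3 / ‖⟪v, w₀⟫_ℂ‖ := by gcongr; linarith
      _ = 3 * κ := by ring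
  have hu₀ : 1 - r ≤ 4 * (3 * κ + ‖w - u • w₀‖) := by
    have hw_split : ‖w‖ ≤ (1 - r) + 3 * κ + ‖w - u • w₀‖ := by
      calc ‖w‖ = ‖((r - 1 : ℝ) : ℂ) • w₀ + (u - (r - 1 : ℝ)) • w₀ + (w - u • w₀)‖ := by
            congr 1; rw [← add_smul, add_sub_cancel]; abel
        _ ≤ |r - 1| + 3 * κ + ‖w - u • w₀‖ := by
            refine (norm_add₃_le).trans (add_le_add (add_le_add ?_ ?_) le_rfl)
            · rw [norm_smul, hw₀, mul_one, Complex.norm_real, Real.norm_eq_abs]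
            · simpa [norm_smul, hw₀] using hu₁
        _ = _ := by rw [abs_of_nonpos (by linarith)]; ring
    refine le_four_mul_of_two_mul_le_sq (by linarith) (by linarith) (by positivity) ?_
    nlinarith [norm_nonneg w]
  refine ⟨r - 1, u - (r - 1 : ℝ), by ring, by linarith, ?_, hu₁⟩
  rwa [abs_of_nonpos (by linarith), neg_sub]

end

namespace BSS

variable {N : ℕ}

theorem inner_wE (x y : EuclideanSpace ℂ (Fin N)) : ⟪y, wE x y⟫_ℂ = ‖⟪x, y⟫_ℂ‖ := by
  rw [wE, inner_smul_right, ← inner_conj_symm y x]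
  generalize ⟪x, y⟫_ℂ = z
  have hpolar : conj z = ‖z‖ * Complex.exp (-(z.arg * Complex.I)) := by
    conv_lhs => rw [← Complex.norm_mul_exp_arg_mul_I z]
    rw [map_mul, Complex.conj_ofReal, ← Complex.exp_conj, map_mul, Complex.conj_ofReal,
      Complex.conj_I, mul_neg]
  rw [hpolar, mul_left_comm, ← Complex.exp_add,
    show Complex.I * z.arg + -(z.arg * Complex.I) = 0 by ring, Complex.exp_zero, mul_one]

theorem norm_wE (x y : EuclideanSpace ℂ (Fin N)) : ‖wE x y‖ = ‖x‖ := by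
  rw [wE, norm_smul, Complex.norm_exp_I_mul_ofReal, one_mul]

theorem c1_ne_zero {A : Matrix (Fin N) (Fin N) ℂ} (hA : IsUnit A.det) (i1 : Fin N) :
    c1 A i1 ≠ 0 := by
  intro h
  have hrow : ∀ j, A⁻¹ i1 j = 0 := fun j => by
    simpa [c1] using congrArg (fun v => v j) h
  have hdiag := congrFun (congrFun (Matrix.nonsing_inv_mul A hA) i1) i1
  simp [Matrix.mul_apply, hrow] at hdiag

theorem norm_w0 {A : Matrix (Fin N) (Fin N) ℂ} (hA : IsUnit A.det) (i1 : Fin N) :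
    ‖w0 A i1‖ = 1 := by
  rw [w0, norm_smul, norm_inv, norm_norm, inv_mul_cancel₀ (norm_ne_zero_iff.2 (c1_ne_zero hA i1))]

theorem norm_apply_le_mnorm (M : Matrix (Fin N) (Fin N) ℂ) (i j : Fin N) :
    ‖M i j‖ ≤ mnorm M :=
  (le_ciSup (Finite.bddAbove_range _) j).trans
    (le_ciSup (Finite.bddAbove_range (fun i => ⨆ j, ‖M i j‖)) i)

theorem norm_apply_le_offMax (M : Matrix (Fin N) (Fin N) ℂ) {i j : Fin N} (hij : i ≠ j) :
    ‖M i j‖ ≤ offMax M := by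
  simpa [offMax, hij] using le_ciSup (Finite.bddAbove_range
    fun p : Fin N × Fin N => if p.1 = p.2 then 0 else ‖M p.1 p.2‖) (i, j)

theorem offMax_nonneg (M : Matrix (Fin N) (Fin N) ℂ) (i : Fin N) : 0 ≤ offMax M := by
  simpa [offMax] using le_ciSup (Finite.bddAbove_range
    fun p : Fin N × Fin N => if p.1 = p.2 then 0 else ‖M p.1 p.2‖) (i, i)

theorem norm_one_sub_apply_le_offMax {M : Matrix (Fin N) (Fin N) ℂ} (hdiag : ∀ i, M i i = 1)
    (i j : Fin N) : ‖(1 - M) i j‖ ≤ offMax M := by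
  rcases eq_or_ne i j with rfl | hij
  · simpa [hdiag] using offMax_nonneg M i
  · simpa [Matrix.one_apply_ne hij] using norm_apply_le_offMax M hij

section

variable {Ω : Type} [MeasurableSpace Ω] {μ : Measure Ω} {s : Ω → Fin N → ℂ}

theorem Cs_eq_gram (hs : ∀ i, MemLp (fun ω => s ω i) 2 μ) :
    Cs μ s = Matrix.gram ℂ fun i => (hs i).star.toLp := by
  ext i j
  rw [Matrix.gram_apply, L2.inner_def]
  refine integral_congr_ae ?_
  filter_upwards [(hs i).star.coeFn_toLp, (hs j).star.coeFn_toLp] with ω hi hj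
  simp [hi, hj, mul_comm]

theorem Cs_apply_self (i : Fin N) : Cs μ s i i = ((∫ ω, ‖s ω i‖ ^ 2 ∂μ : ℝ) : ℂ) := by
  rw [← integral_complex_ofReal]
  simp [Cs, Complex.mul_conj, Complex.normSq_eq_norm_sq]

theorem norm_Cs_apply_le_one (hs : ∀ i, MemLp (fun ω => s ω i) 2 μ)
    (hvar : ∀ i, ∫ ω, ‖s ω i‖ ^ 2 ∂μ = 1) (i j : Fin N) : ‖Cs μ s i j‖ ≤ 1 := by
  have hg : ∀ k, ‖(hs k).star.toLp‖ = 1 := by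
    intro k
    have h := congrArg RCLike.re (congrFun (congrFun (Cs_eq_gram hs) k) k)
    rw [Cs_apply_self, hvar, Matrix.gram_apply, inner_self_eq_norm_sq, Complex.ofReal_one,
      RCLike.one_re] at h
    exact (pow_eq_one_iff_of_nonneg (norm_nonneg _) two_ne_zero).1 h.symm
  rw [Cs_eq_gram hs, Matrix.gram_apply]
  simpa [hg] using norm_inner_le_norm (𝕜 := ℂ) (hs i).star.toLp (hs j).star.toLp

theorem CsInvW0_eq (A : Matrix (Fin N) (Fin N) ℂ) (i1 : Fin N) :
    CsInvW0 μ s A i1 = WithLp.toLp 2 ((Cs μ s)⁻¹ *ᵥ (w0 A i1).ofLp) := rfl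

theorem norm_CsInvW0_sub_w0_le {A : Matrix (Fin N) (Fin N) ℂ} {i1 : Fin N} (hA : IsUnit A.det)
    (hdet : IsUnit (Cs μ s).det) (hdiag : ∀ i, Cs μ s i i = 1) {Γ : ℝ} (hΓ : 0 ≤ Γ)
    (hinv : ∀ i j, ‖(Cs μ s)⁻¹ i j‖ ≤ Γ) :
    ‖CsInvW0 μ s A i1 - w0 A i1‖ ≤ N ^ 2 * Γ * offMax (Cs μ s) := by
  simpa [CsInvW0_eq, norm_w0 hA] using Matrix.norm_toLp_inv_mulVec_sub_le hdet hΓ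
    (offMax_nonneg _ i1) hinv (norm_one_sub_apply_le_offMax hdiag) (w0 A i1)

theorem one_le_mul_norm_inner_CsInvW0 (hs : ∀ i, MemLp (fun ω => s ω i) 2 μ)
    (hvar : ∀ i, ∫ ω, ‖s ω i‖ ^ 2 ∂μ = 1) (hdet : IsUnit (Cs μ s).det)
    {A : Matrix (Fin N) (Fin N) ℂ} (hA : IsUnit A.det) (i1 : Fin N) :
    1 ≤ N * ‖⟪CsInvW0 μ s A i1, w0 A i1⟫_ℂ‖ := by
  set x := w0 A i1
  have hx := norm_w0 hA i1
  have hcs := Matrix.norm_pow_four_le_re_inner_gram_mul_re_inner_inv _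
    (Cs_eq_gram hs ▸ hdet) x
  rw [← Cs_eq_gram hs, ← CsInvW0_eq, hx, one_pow] at hcs
  have hquad : |RCLike.re ⟪x, WithLp.toLp 2 (Cs μ s *ᵥ x.ofLp)⟫_ℂ| ≤ N :=
    calc _ ≤ ‖⟪x, WithLp.toLp 2 (Cs μ s *ᵥ x.ofLp)⟫_ℂ‖ := RCLike.abs_re_le_norm _
      _ ≤ ‖x‖ * (N * 1 * ‖x‖) :=
        (norm_inner_le_norm _ _).trans (by
          gcongr; simpa using Matrix.norm_toLp_mulVec_le zero_le_one
            (norm_Cs_apply_le_one hs hvar) x)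
      _ = N := by rw [hx]; ring
  calc (1 : ℝ) ≤ |RCLike.re ⟪x, WithLp.toLp 2 (Cs μ s *ᵥ x.ofLp)⟫_ℂ| *
        |RCLike.re ⟪CsInvW0 μ s A i1, x⟫_ℂ| := by rw [← abs_mul]; exact hcs.trans (le_abs_self _)
    _ ≤ N * ‖⟪CsInvW0 μ s A i1, x⟫_ℂ‖ := by
        gcongr
        exact RCLike.abs_re_le_norm _

theorem norm_CsInvW0_sub_w0_div_le (hs : ∀ i, MemLp (fun ω => s ω i) 2 μ)
    (hvar : ∀ i, ∫ ω, ‖s ω i‖ ^ 2 ∂μ = 1) (hdet : IsUnit (Cs μ s).det)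
    {A : Matrix (Fin N) (Fin N) ℂ} (hA : IsUnit A.det) (i1 : Fin N) {Γ : ℝ} (hΓ : 0 ≤ Γ)
    (hinv : ∀ i j, ‖(Cs μ s)⁻¹ i j‖ ≤ Γ) :
    ‖CsInvW0 μ s A i1 - w0 A i1‖ / ‖⟪CsInvW0 μ s A i1, w0 A i1⟫_ℂ‖ ≤
      N ^ 3 * Γ * offMax (Cs μ s) := by
  have hd := one_le_mul_norm_inner_CsInvW0 hs hvar hdet hA i1
  have hdiag : ∀ i, Cs μ s i i = 1 := fun i => by rw [Cs_apply_self, hvar, Complex.ofReal_one]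
  rw [div_le_iff₀ (pos_of_mul_pos_right (zero_lt_one.trans_le hd) (Nat.cast_nonneg N))]
  calc _ ≤ N ^ 2 * Γ * offMax (Cs μ s) := norm_CsInvW0_sub_w0_le hA hdet hdiag hΓ hinv
    _ ≤ N ^ 2 * Γ * offMax (Cs μ s) * (N * ‖⟪CsInvW0 μ s A i1, w0 A i1⟫_ℂ‖) :=
        le_mul_of_one_le_right (by have := offMax_nonneg (Cs μ s) i1; positivity) hd
    _ = _ := by ring

end

end BSS

open BSS in
/-- (Lemma `lemU`) The coefficient `u` in `w_e − w₀ = u·w₀ + w_⊥`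
splits as `u = u₀ + u₁` with `u₀ ≥ −1` real, `|u₀| = O(max_{p≠q}|C^s_{pq}| + ‖w_⊥‖)`,
and `|u₁| = O(max_{p≠q}|C^s_{pq}|)`, uniformly over `Γ`-bounded configurations. -/
theorem bss_u_decomposition (N : ℕ) (hN : 2 ≤ N) (Γ : ℝ) (hΓ : 0 < Γ) :
    ∃ C > (0 : ℝ),
      ∀ (Ω : Type) [MeasurableSpace Ω] (μ : Measure Ω) [IsProbabilityMeasure μ]
        (A : Matrix (Fin N) (Fin N) ℂ) (s n : Ω → Fin N → ℂ),
        IsUnit A.det →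
        Measurable s → Measurable n →
        IndepFun s n μ →
        (∀ i, Integrable (fun ω => ‖s ω i‖ ^ 8) μ) →
        (∀ i, Integrable (fun ω => ‖n ω i‖ ^ 8) μ) →
        (∀ i, ∫ ω, s ω i ∂μ = 0) →
        (∀ i, ∫ ω, n ω i ∂μ = 0) →
        (∀ i, ∫ ω, ‖s ω i‖ ^ 2 ∂μ = 1) →
        (∀ i j, ∫ ω, xvec A s n ω i * conj (xvec A s n ω j) ∂μ
            = if i = j then 1 else 0) →
        IsUnit (Cs μ s).det →
        GammaBounded Γ μ A s n →
        ∀ i1 : Fin N, i1 = ⟨0, by omega⟩ →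
        kappa1 μ s i1 ≠ 0 →
        ∀ wte : EuclideanSpace ℂ (Fin N),
          ‖wte‖ = 1 → 0 ≤ (inner ℂ wte (w0 A i1) : ℂ).re →
          (kappa1 μ s i1 < 0 →
            ∀ w : EuclideanSpace ℂ (Fin N), ‖w‖ = 1 → 0 ≤ (inner ℂ w (w0 A i1) : ℂ).re →
              Kf μ A s n wte ≤ Kf μ A s n w) →
          (0 < kappa1 μ s i1 →
            ∀ w : EuclideanSpace ℂ (Fin N), ‖w‖ = 1 → 0 ≤ (inner ℂ w (w0 A i1) : ℂ).re →
              Kf μ A s n w ≤ Kf μ A s n wte) →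
          ∃ (u0 : ℝ) (u1 : ℂ),
            uCoef μ s A i1 (wE wte (w0 A i1) - w0 A i1) = (u0 : ℂ) + u1 ∧
            -1 ≤ u0 ∧
            |u0| ≤ C * (offMax (Cs μ s)
                + ‖wPerp μ s A i1 (wE wte (w0 A i1) - w0 A i1)‖) ∧
            ‖u1‖ ≤ C * offMax (Cs μ s) := by
  refine ⟨12 * N ^ 3 * Γ + 4, by positivity, ?_⟩
  intro Ω _ μ _ A s n hA hs _ _ hs8 _ _ _ hvar _ hdet hbdd i1 _ _ wte hwte _ _ _
  have hL2 : ∀ i, MemLp (fun ω => s ω i) 2 μ := fun i => by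
    have hm := ((measurable_pi_apply i).comp hs).aestronglyMeasurable (μ := μ)
    exact (memLp_two_iff_integrable_sq_norm hm).2
      (integrable_norm_pow_of_le hm (by norm_num) (hs8 i))
  set w := wE wte (w0 A i1) - w0 A i1
  set κ := ‖CsInvW0 μ s A i1 - w0 A i1‖ / ‖inner ℂ (CsInvW0 μ s A i1) (w0 A i1)‖
  have hd := one_le_mul_norm_inner_CsInvW0 hL2 hvar hdet hA i1
  have hκ : κ ≤ N ^ 3 * Γ * offMax (Cs μ s) := norm_CsInvW0_sub_w0_div_le hL2 hvar hdet hA i1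
    hΓ.le fun i j => (norm_apply_le_mnorm _ i j).trans hbdd.2.2.1
  obtain ⟨u0, u1, hu, hu0, habs, hu1⟩ : ∃ (u0 : ℝ) (u1 : ℂ), uCoef μ s A i1 w = u0 + u1 ∧
      -1 ≤ u0 ∧ |u0| ≤ 4 * (3 * κ + ‖wPerp μ s A i1 w‖) ∧ ‖u1‖ ≤ 3 * κ :=
    exists_inner_sub_div_inner_eq_ofReal_add (norm_w0 hA i1) (by rw [norm_wE, hwte])
      (inner_wE wte (w0 A i1)) (norm_nonneg _)
      (norm_pos_iff.1 (pos_of_mul_pos_right (zero_lt_one.trans_le hd) (Nat.cast_nonneg N)))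
  have hNΓ : 0 ≤ (N : ℝ) ^ 3 * Γ := by positivity
  have hm := offMax_nonneg (Cs μ s) i1
  have hP := norm_nonneg (wPerp μ s A i1 w)
  refine ⟨u0, u1, hu, hu0, habs.trans ?_, hu1.trans ?_⟩ <;>
    nlinarith [mul_nonneg hNΓ hP, mul_nonneg hNΓ hm]
end
end

section
/- Let w₀, w ∈ ℂ^N and let t ∈ ℝ be such that w₀ + t·w ≠ 0, and let φ(t) = (w₀ + t·w)/‖w₀ + t·w‖. Then the first three derivatives of φ at t satisfy ‖φ'(t)‖ ≤ 2‖w‖/‖w₀ + t·w‖, ‖φ''(t)‖ ≤ 6‖w‖²/‖w₀ + t·w‖², and ‖φ'''(t)‖ ≤ 36‖w‖³/‖w₀ + t·w‖³. -/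
noncomputable section

/-!
Write `s = ‖a + τ • b‖⁻¹`, `φ = s • (a + τ • b)` and `c = ⟪φ, b⟫`. Then `s' = -c s²`,
`c' = s (‖b‖² - c²)` and `φ' = s b - c s φ`, so differentiating a curve `P • b + Q • φ` gives a
curve of the same shape, and `φ⁽ᵏ⁾ = s ^ k • (P_k(c) • b + Q_k(c) • φ)` for explicit polynomials
`P_k`, `Q_k` (`phi₁`, `phi₂`, `phi₃`). As `‖φ‖ = 1` and `|c| ≤ ‖b‖`, this gives
`‖φ⁽ᵏ⁾‖ ≤ s ^ k (|P_k(c)| ‖b‖ + |Q_k(c)|)`, and termwise estimates of the polynomials give the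
constants `2 = 1 + 1`, `6 = 2 + 4` and `36 = 12 + 24`.
-/

open scoped RealInnerProductSpace

theorem HasDerivAt.norm {E : Type*} [NormedAddCommGroup E] [InnerProductSpace ℝ E]
    {f : ℝ → E} {f' : E} {x : ℝ} (hf : HasDerivAt f f' x) (h0 : f x ≠ 0) :
    HasDerivAt (‖f ·‖) (⟪f x, f'⟫ / ‖f x‖) x := by
  have h := hf.norm_sq.sqrt (by positivity)
  simp only [Real.sqrt_sq (norm_nonneg _)] at h
  convert h using 1
  ring

namespace NormalizedLine

variable {E : Type*} [NormedAddCommGroup E] [InnerProductSpace ℝ E] (a b : E)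

def invNorm (τ : ℝ) : ℝ := ‖a + τ • b‖⁻¹

def phi (τ : ℝ) : E := invNorm a b τ • (a + τ • b)

def radial (τ : ℝ) : ℝ := ⟪phi a b τ, b⟫

def phi₁ (τ : ℝ) : E := invNorm a b τ • b + (-(radial a b τ * invNorm a b τ)) • phi a b τ

def phi₂ (τ : ℝ) : E :=
  (-2 * radial a b τ * invNorm a b τ ^ 2) • b
    + ((3 * radial a b τ ^ 2 - ‖b‖ ^ 2) * invNorm a b τ ^ 2) • phi a b τ

def phi₃ (τ : ℝ) : E :=
  ((9 * radial a b τ ^ 2 - 3 * ‖b‖ ^ 2) * invNorm a b τ ^ 3) • b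
    + ((9 * ‖b‖ ^ 2 * radial a b τ - 15 * radial a b τ ^ 3) * invNorm a b τ ^ 3) • phi a b τ

variable {a b} {t τ : ℝ}

theorem norm_phi (h : a + τ • b ≠ 0) : ‖phi a b τ‖ = 1 := by
  rw [phi, invNorm, norm_smul, norm_inv, norm_norm, inv_mul_cancel₀ (norm_ne_zero_iff.2 h)]

theorem abs_radial_le (h : a + τ • b ≠ 0) : |radial a b τ| ≤ ‖b‖ := by
  simpa [radial, norm_phi h] using abs_real_inner_le_norm (phi a b τ) b

theorem norm_smul_add_smul_phi_le (h : a + τ • b ≠ 0) (P Q : ℝ) :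
    ‖P • b + Q • phi a b τ‖ ≤ |P| * ‖b‖ + |Q| := by
  simpa [norm_smul, norm_phi h] using norm_add_le (P • b) (Q • phi a b τ)

theorem hasDerivAt_line : HasDerivAt (fun σ : ℝ => a + σ • b) b τ := by
  simpa using ((hasDerivAt_id τ).smul_const b).const_add a

theorem hasDerivAt_invNorm (h : a + τ • b ≠ 0) :
    HasDerivAt (invNorm a b) (-(radial a b τ * invNorm a b τ ^ 2)) τ := by
  have hr : ‖a + τ • b‖ ≠ 0 := norm_ne_zero_iff.2 h
  refine ((hasDerivAt_line.norm h).inv hr).congr_deriv ?_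
  simp only [radial, phi, invNorm, real_inner_smul_left]
  field_simp

theorem hasDerivAt_phi (h : a + τ • b ≠ 0) : HasDerivAt (phi a b) (phi₁ a b τ) τ := by
  refine ((hasDerivAt_invNorm h).smul hasDerivAt_line).congr_deriv ?_
  simp only [phi₁, phi]
  module

theorem hasDerivAt_radial (h : a + τ • b ≠ 0) :
    HasDerivAt (radial a b) (invNorm a b τ * (‖b‖ ^ 2 - radial a b τ ^ 2)) τ := by
  refine ((hasDerivAt_phi h).inner ℝ (hasDerivAt_const τ b)).congr_deriv ?_
  simp only [phi₁, inner_zero_right, zero_add, inner_add_left, real_inner_smul_left,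
    real_inner_self_eq_norm_sq, radial]
  ring

theorem hasDerivAt_smul_add_smul_phi {P Q : ℝ → ℝ} {P' Q' : ℝ} (hP : HasDerivAt P P' τ)
    (hQ : HasDerivAt Q Q' τ) (h : a + τ • b ≠ 0) :
    HasDerivAt (fun σ => P σ • b + Q σ • phi a b σ)
      ((P' + Q τ * invNorm a b τ) • b
        + (Q' - Q τ * (radial a b τ * invNorm a b τ)) • phi a b τ) τ := by
  refine ((hP.smul_const b).add (hQ.smul (hasDerivAt_phi h))).congr_deriv ?_
  simp only [phi₁]
  module

theorem hasDerivAt_phi₁ (h : a + τ • b ≠ 0) : HasDerivAt (phi₁ a b) (phi₂ a b τ) τ := by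
  have hs := hasDerivAt_invNorm h
  have hc := hasDerivAt_radial h
  refine (hasDerivAt_smul_add_smul_phi hs (hc.mul hs).neg h).congr_deriv ?_
  simp only [phi₂, Pi.neg_apply, Pi.mul_apply]
  congr 2 <;> ring

theorem hasDerivAt_phi₂ (h : a + τ • b ≠ 0) : HasDerivAt (phi₂ a b) (phi₃ a b τ) τ := by
  have hs := hasDerivAt_invNorm h
  have hc := hasDerivAt_radial h
  refine (hasDerivAt_smul_add_smul_phi (((hc.const_mul (-2)).mul (hs.pow 2)))
    ((((hc.pow 2).const_mul 3).sub_const (‖b‖ ^ 2)).mul (hs.pow 2)) h).congr_deriv ?_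
  simp only [phi₃, Pi.mul_apply, Pi.pow_apply]
  congr 2 <;> ring

theorem norm_pow_smul_add_pow_smul_phi_le (h : a + τ • b ≠ 0) {P Q C : ℝ} (k : ℕ)
    (hPQ : |P| * ‖b‖ + |Q| ≤ C * ‖b‖ ^ k) :
    ‖(P * invNorm a b τ ^ k) • b + (Q * invNorm a b τ ^ k) • phi a b τ‖
      ≤ C * ‖b‖ ^ k / ‖a + τ • b‖ ^ k := by
  have hs : 0 ≤ invNorm a b τ ^ k := pow_nonneg (inv_nonneg.2 (norm_nonneg _)) k
  calc _ ≤ |P * invNorm a b τ ^ k| * ‖b‖ + |Q * invNorm a b τ ^ k| :=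
        norm_smul_add_smul_phi_le h _ _
    _ = (|P| * ‖b‖ + |Q|) * invNorm a b τ ^ k := by
        rw [abs_mul, abs_mul, abs_of_nonneg hs]; ring
    _ ≤ C * ‖b‖ ^ k * invNorm a b τ ^ k := by gcongr
    _ = C * ‖b‖ ^ k / ‖a + τ • b‖ ^ k := by rw [invNorm, inv_pow, div_eq_mul_inv]

theorem norm_phi₁_le (h : a + τ • b ≠ 0) : ‖phi₁ a b τ‖ ≤ 2 * ‖b‖ / ‖a + τ • b‖ := by
  have hc := abs_radial_le h
  have key := norm_pow_smul_add_pow_smul_phi_le h (P := 1) (Q := -radial a b τ) (C := 2) 1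
    (by rw [abs_one, abs_neg]; linarith)
  simpa only [phi₁, pow_one, one_mul, neg_mul] using key

theorem norm_phi₂_le (h : a + τ • b ≠ 0) :
    ‖phi₂ a b τ‖ ≤ 6 * ‖b‖ ^ 2 / ‖a + τ • b‖ ^ 2 := by
  have hc := abs_radial_le h
  have hc2 : radial a b τ ^ 2 ≤ ‖b‖ ^ 2 := sq_le_sq' (abs_le.1 hc).1 (abs_le.1 hc).2
  refine norm_pow_smul_add_pow_smul_phi_le h 2 ?_
  have h1 : |-2 * radial a b τ| ≤ 2 * ‖b‖ := by rw [abs_mul, abs_neg, abs_two]; linarith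
  have h2 : |3 * radial a b τ ^ 2 - ‖b‖ ^ 2| ≤ 4 * ‖b‖ ^ 2 :=
    abs_le.2 ⟨by nlinarith [sq_nonneg (radial a b τ)], by nlinarith⟩
  linarith [mul_le_mul_of_nonneg_right h1 (norm_nonneg b)]

theorem norm_phi₃_le (h : a + τ • b ≠ 0) :
    ‖phi₃ a b τ‖ ≤ 36 * ‖b‖ ^ 3 / ‖a + τ • b‖ ^ 3 := by
  have hc := abs_radial_le h
  have hc2 : radial a b τ ^ 2 ≤ ‖b‖ ^ 2 := sq_le_sq' (abs_le.1 hc).1 (abs_le.1 hc).2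
  refine norm_pow_smul_add_pow_smul_phi_le h 3 ?_
  have h1 : |9 * radial a b τ ^ 2 - 3 * ‖b‖ ^ 2| ≤ 12 * ‖b‖ ^ 2 :=
    abs_le.2 ⟨by nlinarith [sq_nonneg (radial a b τ)], by nlinarith⟩
  have h2 : |9 * ‖b‖ ^ 2 * radial a b τ - 15 * radial a b τ ^ 3| ≤ 24 * ‖b‖ ^ 3 := by
    have h3 : |9 * ‖b‖ ^ 2 - 15 * radial a b τ ^ 2| ≤ 24 * ‖b‖ ^ 2 :=
      abs_le.2 ⟨by nlinarith, by nlinarith [sq_nonneg (radial a b τ)]⟩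
    calc _ = |radial a b τ| * |9 * ‖b‖ ^ 2 - 15 * radial a b τ ^ 2| := by
          rw [← abs_mul]; congr 1; ring
      _ ≤ ‖b‖ * (24 * ‖b‖ ^ 2) := by gcongr
      _ = 24 * ‖b‖ ^ 3 := by ring
  linarith [mul_le_mul_of_nonneg_right h1 (norm_nonneg b)]

theorem norm_deriv_phi_le (h : a + t • b ≠ 0) :
    ‖deriv (phi a b) t‖ ≤ 2 * ‖b‖ / ‖a + t • b‖ ∧
    ‖deriv (deriv (phi a b)) t‖ ≤ 6 * ‖b‖ ^ 2 / ‖a + t • b‖ ^ 2 ∧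
    ‖deriv (deriv (deriv (phi a b))) t‖ ≤ 36 * ‖b‖ ^ 3 / ‖a + t • b‖ ^ 3 := by
  have hU : IsOpen {σ : ℝ | a + σ • b ≠ 0} := isOpen_ne_fun (by fun_prop) continuous_const
  have hd₁ : Set.EqOn (deriv (phi a b)) (phi₁ a b) {σ | a + σ • b ≠ 0} :=
    fun σ hσ => (hasDerivAt_phi hσ).deriv
  have hd₂ : Set.EqOn (deriv (deriv (phi a b))) (phi₂ a b) {σ | a + σ • b ≠ 0} :=
    fun σ hσ => (hd₁.deriv hU hσ).trans (hasDerivAt_phi₁ hσ).deriv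
  have hd₃ : deriv (deriv (deriv (phi a b))) t = phi₃ a b t :=
    (hd₂.deriv hU h).trans (hasDerivAt_phi₂ h).deriv
  rw [hd₁ h, hd₂ h, hd₃]
  exact ⟨norm_phi₁_le h, norm_phi₂_le h, norm_phi₃_le h⟩

end NormalizedLine

/-- Bounds on the first three derivatives of
`φ(t) = (w₀ + t·w)/‖w₀ + t·w‖` at a point `t` with `w₀ + t·w ≠ 0`. -/
theorem phiCurve_deriv_bounds (N : ℕ) (w0 w : EuclideanSpace ℂ (Fin N)) (t : ℝ)
    (h : w0 + (t : ℂ) • w ≠ 0) :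
    ‖deriv (fun τ : ℝ => ‖w0 + (τ : ℂ) • w‖⁻¹ • (w0 + (τ : ℂ) • w)) t‖
        ≤ 2 * ‖w‖ / ‖w0 + (t : ℂ) • w‖ ∧
    ‖deriv (deriv (fun τ : ℝ => ‖w0 + (τ : ℂ) • w‖⁻¹ • (w0 + (τ : ℂ) • w))) t‖
        ≤ 6 * ‖w‖ ^ 2 / ‖w0 + (t : ℂ) • w‖ ^ 2 ∧
    ‖deriv (deriv (deriv (fun τ : ℝ => ‖w0 + (τ : ℂ) • w‖⁻¹ • (w0 + (τ : ℂ) • w)))) t‖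
        ≤ 36 * ‖w‖ ^ 3 / ‖w0 + (t : ℂ) • w‖ ^ 3 := by
  -- `EuclideanSpace ℂ (Fin N)` is also a real inner product space, through `PiLp.innerProductSpace`.
  simp_rw [Complex.coe_smul] at h ⊢
  exact NormalizedLine.norm_deriv_phi_le h
end
end
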